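/- For all real numbers c > -1 and X ≥ 1, the improper integral ∫₁^∞ dT/(√T · √(T+c) · (√(X+c)+√(T+c))) converges and equals (2/√X) · log( (√(X+c)+√X)·(√X+1) / (√X·√(1+c)+√(X+c)) ). -/

import Mathlib

/-!
With `s = √T`, `t = √(T + c)`, `x = √X`, `a = √(X + c)` one has `a² - x² = c = t² - s²`, and
these two relations make `(2 / x) · log ((a t + x s + c) / (t + a))` a primitive of the integrand
on `[1, ∞)`. The quotient tends to `a + x` as `T → ∞`, so the integral converges (the integrand
is positive) and equals `(2 / x) log (a + x)` minus the value of the primitive at `T = 1`.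
-/

open MeasureTheory Filter Topology Real

namespace SqrtIntegral

noncomputable def primitive (a x c T : ℝ) : ℝ :=
  2 / x * log ((a * √(T + c) + x * √T + c) / (√(T + c) + a))

variable {a x c T : ℝ}

theorem hasDerivAt_primitive (h : a ^ 2 = x ^ 2 + c) (hx : x ≠ 0) (hT : 0 < T) (hTc : 0 < T + c)
    (hN : a * √(T + c) + x * √T + c ≠ 0) (hD : √(T + c) + a ≠ 0) :
    HasDerivAt (primitive a x c) (1 / (√T * √(T + c) * (a + √(T + c)))) T := by
  have hs : HasDerivAt (√·) (1 / (2 * √T)) T := hasDerivAt_sqrt hT.ne'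
  have ht : HasDerivAt (fun T => √(T + c)) (1 / (2 * √(T + c))) T := by
    simpa [Function.comp_def] using (hasDerivAt_sqrt hTc.ne').comp T ((hasDerivAt_id T).add_const c)
  have hN' : HasDerivAt (fun T => a * √(T + c) + x * √T + c)
      (a * (1 / (2 * √(T + c))) + x * (1 / (2 * √T))) T :=
    ((ht.const_mul a).add (hs.const_mul x)).add_const c
  have hD' : HasDerivAt (fun T => √(T + c) + a) (1 / (2 * √(T + c))) T := ht.add_const a
  refine (((hN'.div hD' hD).log (div_ne_zero hN hD)).const_mul (2 / x)).congr_deriv ?_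
  have hs0 := sqrt_pos.2 hT
  have ht0 := sqrt_pos.2 hTc
  have hs2 := sq_sqrt hT.le
  have ht2 := sq_sqrt hTc.le
  have hD2 : a + √(T + c) ≠ 0 := by rwa [add_comm]
  simp only [Pi.div_apply]
  field_simp
  linear_combination (a + √(T + c)) * (√T * h + x * (ht2 - hs2))

theorem tendsto_sqrt_add_div_sqrt (c : ℝ) :
    Tendsto (fun T => √(T + c) / √T) atTop (𝓝 1) := by
  have h : Tendsto (fun T : ℝ => 1 + c * T⁻¹) atTop (𝓝 1) := by
    simpa using (tendsto_inv_atTop_zero.const_mul c).const_add 1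
  refine (by simpa using h.sqrt : Tendsto (fun T : ℝ => √(1 + c * T⁻¹)) atTop (𝓝 1)).congr' ?_
  filter_upwards [eventually_gt_atTop 0] with T hT
  rw [← sqrt_div' _ hT.le]
  congr 1
  field_simp

theorem tendsto_primitive (hax : a + x ≠ 0) :
    Tendsto (primitive a x c) atTop (𝓝 (2 / x * log (a + x))) := by
  have hr := tendsto_sqrt_add_div_sqrt c
  have hi : Tendsto (fun T => (√T)⁻¹) atTop (𝓝 0) := tendsto_inv_atTop_zero.comp tendsto_sqrt_atTop
  have hq := (((hr.const_mul a).add_const x).add (hi.const_mul c)).div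
    (hr.add (hi.const_mul a)) (by norm_num)
  simp only [mul_one, mul_zero, add_zero, div_one] at hq
  refine ((hq.log hax).const_mul (2 / x)).congr' ?_
  filter_upwards [eventually_gt_atTop 0] with T hT
  have := sqrt_pos.2 hT
  simp only [Pi.div_apply, primitive]
  congr 2
  field_simp

theorem log_sub_primitive_one (h : a ^ 2 = x ^ 2 + c) (hc : 0 ≤ 1 + c) (hax : a + x ≠ 0)
    (hN : a * √(1 + c) + x + c ≠ 0) (hD : √(1 + c) + a ≠ 0) (hE : x * √(1 + c) + a ≠ 0) :
    2 / x * log (a + x) - primitive a x c 1 =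
      2 / x * log ((a + x) * (x + 1) / (x * √(1 + c) + a)) := by
  rw [primitive, sqrt_one, mul_one, ← mul_sub, ← log_div hax (div_ne_zero hN hD)]
  congr 2
  field_simp
  linear_combination x * sq_sqrt hc + h

end SqrtIntegral

open SqrtIntegral

theorem stmt_0 (c X : ℝ) (hc : -1 < c) (hX : 1 ≤ X) :
    IntegrableOn
      (fun T => 1 / (Real.sqrt T * Real.sqrt (T + c) * (Real.sqrt (X + c) + Real.sqrt (T + c))))
      (Set.Ioi 1) ∧
    ∫ T in Set.Ioi (1 : ℝ),
        1 / (Real.sqrt T * Real.sqrt (T + c) * (Real.sqrt (X + c) + Real.sqrt (T + c)))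
      = (2 / Real.sqrt X) *
        Real.log ((Real.sqrt (X + c) + Real.sqrt X) * (Real.sqrt X + 1) /
          (Real.sqrt X * Real.sqrt (1 + c) + Real.sqrt (X + c))) := by
  have hx : 1 ≤ √X := one_le_sqrt.2 hX
  have ha : 0 < √(X + c) := sqrt_pos.2 (by linarith)
  have hsq : √(X + c) ^ 2 = √X ^ 2 + c := by
    rw [sq_sqrt (by linarith), sq_sqrt (by linarith)]
  have hderiv (T : ℝ) (hT : T ∈ Set.Ici 1) : HasDerivAt (primitive (√(X + c)) (√X) c)
      (1 / (√T * √(T + c) * (√(X + c) + √(T + c)))) T := by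
    have hxT : 1 ≤ √X * √T := one_le_mul_of_one_le_of_one_le hx (one_le_sqrt.2 hT)
    have hat : 0 ≤ √(X + c) * √(T + c) := by positivity
    exact hasDerivAt_primitive hsq (by positivity) (by linarith [hT.out]) (by linarith [hT.out])
      (by linarith) (by positivity)
  have hnonneg (T : ℝ) (_ : T ∈ Set.Ioi 1) :
      0 ≤ 1 / (√T * √(T + c) * (√(X + c) + √(T + c))) := by positivity
  have hlim := tendsto_primitive (c := c) (by positivity : √(X + c) + √X ≠ 0)
  refine ⟨integrableOn_Ioi_deriv_of_nonneg' hderiv hnonneg hlim, ?_⟩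
  rw [integral_Ioi_of_hasDerivAt_of_nonneg' hderiv hnonneg hlim]
  have hN : 0 < √(X + c) * √(1 + c) + √X + c := by
    have := mul_nonneg ha.le (sqrt_nonneg (1 + c))
    linarith
  exact log_sub_primitive_one hsq (by linarith) (by positivity) hN.ne' (by positivity)
    (by positivity)
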